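/- Let G be a snake graph with sign function f, and let P be a perfect matching of G consisting of boundary edges only. If a is a north-or-east boundary edge lying in P (or a south-or-west boundary edge not lying in P), then P consists precisely of all north-or-east boundary edges b with f(b) = f(a) together with all south-or-west boundary edges b with f(b) = −f(a). -/

import Mathlib

/-!
Abstract snake graphs (Canakci–Schiffler, "Snake graph calculus II"), modelled
concretely on the unit square lattice in the plane.

A tile is a unit lattice square; a snake graph is a sequence of tiles, each
subsequent tile lying to the north or to the east of the previous one.
-/

/-- A lattice point in the plane. -/
abbrev Pt : Type := ℤ × ℤ

/-- An edge of the unit square lattice: a base point together with an orientation flag.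
`(p, false)` is the horizontal edge from `p` to `p + (1,0)`;
`(p, true)` is the vertical edge from `p` to `p + (0,1)`. -/
abbrev Edge : Type := Pt × Bool

namespace SnakeCalc

open scoped Classical

noncomputable section

/-- The two endpoints of a lattice edge. -/
def ends (e : Edge) : Finset Pt :=
  {e.1, if e.2 then (e.1.1, e.1.2 + 1) else (e.1.1 + 1, e.1.2)}

/-- Translation of an edge by a vector. -/
def tr (v : Pt) (e : Edge) : Edge := ((e.1.1 + v.1, e.1.2 + v.2), e.2)

/-- Difference of two lattice points. -/
def psub (p q : Pt) : Pt := (p.1 - q.1, p.2 - q.2)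

/-- Rotation of an edge by 180 degrees; the rotation sends the unit square with corners
`(0,0)` and `(1,1)` to the unit square with corners `c - (1,1)` and `c`. -/
def rot (c : Pt) (e : Edge) : Edge :=
  if e.2 then ((c.1 - e.1.1, c.2 - e.1.2 - 1), true)
  else ((c.1 - e.1.1 - 1, c.2 - e.1.2), false)

/-- South edge of the unit tile with southwest corner `p`. -/
def south (p : Pt) : Edge := (p, false)

/-- North edge of the unit tile with southwest corner `p`. -/
def north (p : Pt) : Edge := ((p.1, p.2 + 1), false)

/-- West edge of the unit tile with southwest corner `p`. -/
def west (p : Pt) : Edge := (p, true)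

/-- East edge of the unit tile with southwest corner `p`. -/
def east (p : Pt) : Edge := ((p.1 + 1, p.2), true)

/-- The canonical sign function on lattice edges (signs are booleans): on every unit tile
the north and west edges get the same sign, the south and east edges get the same sign,
and the north and south edges get opposite signs. -/
def canonSign (e : Edge) : Bool :=
  if e.2 then decide ¬((e.1.1 + e.1.2) % 2 = 0) else decide ((e.1.1 + e.1.2) % 2 = 0)

/-- An abstract snake graph with `n + 1 ≥ 1` tiles `G_0, …, G_n`.
`dir i` (for `i < n`) records whether tile `i+1` is glued to the north (`true`)
or to the east (`false`) of tile `i`; the values `dir i` for `i ≥ n` are irrelevant. -/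
structure SnakeGraph where
  n : ℕ
  dir : ℕ → Bool

namespace SnakeGraph

variable (G : SnakeGraph)

/-- The southwest corner of tile `i`. -/
def pos : ℕ → Pt
  | 0 => ((0 : ℤ), (0 : ℤ))
  | i + 1 =>
      if G.dir i then ((pos i).1, (pos i).2 + 1) else ((pos i).1 + 1, (pos i).2)

/-- The four edges of the unit tile with southwest corner `p`. -/
def tileEdges (p : Pt) : Finset Edge := {south p, north p, west p, east p}

/-- The four vertices of the unit tile with southwest corner `p`. -/
def tileVertices (p : Pt) : Finset Pt :=
  {p, (p.1 + 1, p.2), (p.1, p.2 + 1), (p.1 + 1, p.2 + 1)}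

/-- The edge set of the snake graph. -/
def edges : Finset Edge := (Finset.range (G.n + 1)).biUnion fun i => tileEdges (G.pos i)

/-- The vertex set of the snake graph. -/
def vertices : Finset Pt := (Finset.range (G.n + 1)).biUnion fun i => tileVertices (G.pos i)

/-- The interior edge `e_i` shared by the tiles `i` and `i+1` (meaningful for `i < n`). -/
def ie (i : ℕ) : Edge := if G.dir i then north (G.pos i) else east (G.pos i)

/-- The set of interior edges of the snake graph. -/
def interiorEdges : Finset Edge := (Finset.range G.n).image fun i => G.ie i

/-- An edge of `G` which is not an interior edge is a boundary edge. -/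
def IsBoundaryEdge (e : Edge) : Prop := e ∈ G.edges ∧ e ∉ G.interiorEdges

/-- The edges of the tiles `a, a+1, …, b` of `G` (in place). -/
def segEdges (a b : ℕ) : Finset Edge :=
  (Finset.Icc a b).biUnion fun i => tileEdges (G.pos i)

/-- The interior edges of the segment of tiles `a, …, b` of `G`. -/
def segInterior (a b : ℕ) : Finset Edge := (Finset.Ico a b).image fun i => G.ie i

/-- The boundary edges of the segment of tiles `a, …, b` of `G`
(the boundary cycle of the union of these tiles). -/
def segBoundary (a b : ℕ) : Finset Edge := G.segEdges a b \ G.segInterior a b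

/-- `f` is a sign function on `G`: on every tile of `G` the north and the west edge have the
same sign, the south and the east edge have the same sign, and the sign on the north edge is
opposite to the sign on the south edge. -/
def IsSignFunction (f : Edge → Bool) : Prop :=
  ∀ i ≤ G.n,
    f (north (G.pos i)) = f (west (G.pos i)) ∧
    f (south (G.pos i)) = f (east (G.pos i)) ∧
    f (north (G.pos i)) = ! f (south (G.pos i))

/-- `e` is a north edge or an east edge of some tile of `G`. -/
def IsNE (e : Edge) : Prop := ∃ i ≤ G.n, e = north (G.pos i) ∨ e = east (G.pos i)

/-- `e` is a south edge or a west edge of some tile of `G`. -/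
def IsSW (e : Edge) : Prop := ∃ i ≤ G.n, e = south (G.pos i) ∨ e = west (G.pos i)

/-- `P` is a perfect matching of `G`: a set of edges of `G` such that every vertex of `G` is
incident to exactly one edge of `P`. -/
def IsPerfectMatching (P : Finset Edge) : Prop :=
  P ⊆ G.edges ∧ ∀ v ∈ G.vertices, (P.filter fun e => v ∈ ends e).card = 1

/-- The type of perfect matchings of `G`. -/
def Matchings := { P : Finset Edge // G.IsPerfectMatching P }

/-- The segment of tiles `a, …, b` of `G`, as a standalone snake graph (based at the origin). -/
def segment (a b : ℕ) : SnakeGraph := ⟨b - a, fun k => G.dir (a + k)⟩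

/-- The reversed segment of tiles `b, b-1, …, a` of `G`, as a standalone snake graph. -/
def revSegment (a b : ℕ) : SnakeGraph := ⟨b - a, fun k => G.dir (b - 1 - k)⟩

end SnakeGraph

/-- Concatenation of two snake graphs, the first tile of `K` being glued to the last tile
of `H` in direction `d` (`true` = north, `false` = east). -/
def concat (H K : SnakeGraph) (d : Bool) : SnakeGraph :=
  ⟨H.n + 1 + K.n, fun k => if k < H.n then H.dir k else if k = H.n then d else K.dir (k - H.n - 1)⟩

/-- A possibly degenerate snake graph: the zero element, a single edge, or an honest
snake graph. -/
inductive SnakeObj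
  | zero
  | edge
  | graph (G : SnakeGraph)

/-- Perfect matchings of a possibly degenerate snake graph: the zero object has none, the
single edge has exactly one, and a snake graph has its usual perfect matchings. -/
def SnakeObj.Matchings : SnakeObj → Type
  | .zero => Empty
  | .edge => PUnit
  | .graph G => G.Matchings

/-- `G ∖ pred(e)`, where `e` is the first edge among the interior edges `e_j` (`j ≥ a`) of `G`
together with the north-east edges of the last tile whose sign agrees with the sign of the
reference edge `r`: remove all predecessors of `e`.  If no interior edge qualifies, `e` is a
north-east edge of the last tile and the result is a single edge. -/
def SnakeGraph.cutPredFrom (G : SnakeGraph) (a : ℕ) (r : Edge) : SnakeObj :=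
  if h : ∃ j, a ≤ j ∧ j < G.n ∧ canonSign (G.ie j) = canonSign r then
    .graph ⟨G.n - (Nat.find h + 1), fun k => G.dir (Nat.find h + 1 + k)⟩
  else .edge

/-- `G ∖ succ(e)`, where `e` is the last edge among the south-west edges of the first tile
together with the interior edges of `G` whose sign agrees with the sign of `r`. -/
def SnakeGraph.cutSuccAt (G : SnakeGraph) (r : Edge) : SnakeObj :=
  if _ : ∃ j, j < G.n ∧ canonSign (G.ie j) = canonSign r then
    .graph ⟨Nat.findGreatest (fun j => j < G.n ∧ canonSign (G.ie j) = canonSign r) G.n, G.dir⟩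
  else .edge

/-- `G ∖ pred(e) ∖ succ(e')`, where `e` is the first edge with sign equal to that of `r` and
`e'` is the last edge with sign equal to that of `r'` (both among interior edges, with the
degenerate conventions of the paper); the result may be zero. -/
def SnakeGraph.cutBothAt (G : SnakeGraph) (r r' : Edge) : SnakeObj :=
  if h : ∃ j, j < G.n ∧ canonSign (G.ie j) = canonSign r then
    if _ : ∃ j, j < G.n ∧ canonSign (G.ie j) = canonSign r' then
      let j₁ := Nat.find h
      let j₂ := Nat.findGreatest (fun j => j < G.n ∧ canonSign (G.ie j) = canonSign r') G.n
      if j₁ < j₂ then .graph ⟨j₂ - (j₁ + 1), fun k => G.dir (j₁ + 1 + k)⟩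
      else if j₁ = j₂ then .edge
      else .zero
    else .zero
  else .zero

end

end SnakeCalc

/-!
The boundary of a snake graph consists of two lattice paths from the southwest corner of the
first tile to the northeast corner of the last one: an upper path of west and north edges and a
lower path of south and east edges. Every vertex other than these two corners lies on exactly one
of the paths, where it meets exactly two boundary edges, so a perfect matching by boundary edges
takes every other edge of each path, starting at the origin with the edge of one path and not of
the other. The `k`-th edge of either path starts at level `x + y = k`, and the canonical sign of
a tile side is a parity of its level; this turns the alternation into the sign condition, and
any sign function agrees with the canonical one up to a global flip.
-/

lemma Nat.bodd_eq_decide_intCast_emod (n : ℕ) : n.bodd = decide ((n : ℤ) % 2 = 1) := by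
  have := Nat.mod_two_of_bodd n
  cases h : n.bodd <;> simp [h] at this ⊢ <;> omega

namespace SnakeCalc

lemma level_of_mem_ends {v : Pt} {e : Edge} (h : v ∈ ends e) :
    v.1 + v.2 = e.1.1 + e.1.2 ∨ v.1 + v.2 = e.1.1 + e.1.2 + 1 := by
  simp only [ends, Finset.mem_insert, Finset.mem_singleton] at h
  rcases h with rfl | rfl
  · exact Or.inl rfl
  · split <;> omega

namespace SnakeGraph

variable (G : SnakeGraph)

@[simp]
lemma pos_zero : G.pos 0 = (0, 0) := rfl

lemma pos_succ_of_dir_eq_true {i : ℕ} (h : G.dir i = true) :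
    G.pos (i + 1) = ((G.pos i).1, (G.pos i).2 + 1) := by
  simp [pos, h]

lemma pos_succ_of_dir_eq_false {i : ℕ} (h : G.dir i = false) :
    G.pos (i + 1) = ((G.pos i).1 + 1, (G.pos i).2) := by
  simp [pos, h]

lemma pos_fst_add_snd (i : ℕ) : (G.pos i).1 + (G.pos i).2 = i := by
  induction i with
  | zero => rfl
  | succ i ih =>
    cases h : G.dir i
    · rw [G.pos_succ_of_dir_eq_false h]; push_cast; omega
    · rw [G.pos_succ_of_dir_eq_true h]; push_cast; omega

lemma pos_nonneg (i : ℕ) : 0 ≤ (G.pos i).1 ∧ 0 ≤ (G.pos i).2 := by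
  induction i with
  | zero => simp
  | succ i ih =>
    cases h : G.dir i
    · rw [G.pos_succ_of_dir_eq_false h]; omega
    · rw [G.pos_succ_of_dir_eq_true h]; omega

lemma mem_edges_iff {e : Edge} : e ∈ G.edges ↔ ∃ i ≤ G.n,
    e = south (G.pos i) ∨ e = north (G.pos i) ∨ e = west (G.pos i) ∨ e = east (G.pos i) := by
  simp [edges, tileEdges]

lemma isNE_or_isSW_of_mem_edges {e : Edge} (he : e ∈ G.edges) : G.IsNE e ∨ G.IsSW e := by
  obtain ⟨i, hi, h | h | h | h⟩ := G.mem_edges_iff.mp he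
  exacts [Or.inr ⟨i, hi, Or.inl h⟩, Or.inl ⟨i, hi, Or.inl h⟩, Or.inr ⟨i, hi, Or.inr h⟩,
    Or.inl ⟨i, hi, Or.inr h⟩]

lemma mem_vertices {i : ℕ} {v : Pt} (hi : i ≤ G.n) (hv : v ∈ tileVertices (G.pos i)) :
    v ∈ G.vertices :=
  Finset.mem_biUnion.mpr ⟨i, Finset.mem_range.mpr (Nat.lt_succ_of_le hi), hv⟩

lemma ie_mem_interiorEdges {i : ℕ} (h : i < G.n) : G.ie i ∈ G.interiorEdges :=
  Finset.mem_image_of_mem _ (Finset.mem_range.mpr h)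

lemma ie_mem_tileEdges (i : ℕ) : G.ie i ∈ tileEdges (G.pos i) := by
  unfold ie; split <;> simp [tileEdges]

lemma ie_mem_tileEdges_succ (i : ℕ) : G.ie i ∈ tileEdges (G.pos (i + 1)) := by
  unfold ie
  split_ifs with hd
  · simp [tileEdges, south, north, G.pos_succ_of_dir_eq_true hd]
  · simp [tileEdges, west, east, G.pos_succ_of_dir_eq_false (Bool.of_not_eq_true hd)]

lemma canonSign_south (i : ℕ) : canonSign (south (G.pos i)) = !i.bodd := by
  simp only [canonSign, south, Bool.false_eq_true, if_false, G.pos_fst_add_snd,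
    Nat.bodd_eq_decide_intCast_emod]
  rcases Int.emod_two_eq_zero_or_one (i : ℤ) with h | h <;> simp [h]

lemma canonSign_west (i : ℕ) : canonSign (west (G.pos i)) = i.bodd := by
  simp only [canonSign, west, if_true, G.pos_fst_add_snd, Nat.bodd_eq_decide_intCast_emod]
  rcases Int.emod_two_eq_zero_or_one (i : ℤ) with h | h <;> simp [h]

lemma canonSign_north (i : ℕ) : canonSign (north (G.pos i)) = !(i + 1).bodd := by
  simp only [canonSign, north, Bool.false_eq_true, if_false, ← add_assoc, G.pos_fst_add_snd,
    Nat.bodd_eq_decide_intCast_emod, Nat.cast_succ]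
  rcases Int.emod_two_eq_zero_or_one ((i : ℤ) + 1) with h | h <;> simp [h]

lemma canonSign_east (i : ℕ) : canonSign (east (G.pos i)) = (i + 1).bodd := by
  simp only [canonSign, east, if_true, add_right_comm _ (1 : ℤ), G.pos_fst_add_snd,
    Nat.bodd_eq_decide_intCast_emod, Nat.cast_succ]
  rcases Int.emod_two_eq_zero_or_one ((i : ℤ) + 1) with h | h <;> simp [h]

lemma isSignFunction_canonSign : G.IsSignFunction canonSign := fun i _ => by
  simp only [canonSign_north, canonSign_south, canonSign_east, canonSign_west, Nat.bodd_succ]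
  simp

namespace IsSignFunction

variable {G} {f g : Edge → Bool}

lemma eq_xor_iff_of_mem_tileEdges (hf : G.IsSignFunction f) (hg : G.IsSignFunction g)
    {i : ℕ} (hi : i ≤ G.n) (s : Bool) {e : Edge} (he : e ∈ tileEdges (G.pos i)) :
    f e = xor (g e) s ↔ f (south (G.pos i)) = xor (g (south (G.pos i))) s := by
  obtain ⟨hfNW, hfSE, hfNS⟩ := hf i hi
  obtain ⟨hgNW, hgSE, hgNS⟩ := hg i hi
  simp only [tileEdges, Finset.mem_insert, Finset.mem_singleton] at he
  rcases he with rfl | rfl | rfl | rfl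
  · rfl
  · rw [hfNS, hgNS, Bool.not_xor, Bool.not_inj_iff]
  · rw [← hfNW, ← hgNW, hfNS, hgNS, Bool.not_xor, Bool.not_inj_iff]
  · rw [← hfSE, ← hgSE]

theorem exists_eq_xor (hf : G.IsSignFunction f) (hg : G.IsSignFunction g) :
    ∃ s, ∀ e ∈ G.edges, f e = xor (g e) s := by
  set s := xor (f (south (G.pos 0))) (g (south (G.pos 0)))
  have hsouth : ∀ i ≤ G.n, f (south (G.pos i)) = xor (g (south (G.pos i))) s := by
    intro i hi
    induction i with
    | zero => simp only [s, Bool.xor_left_comm (g _), Bool.xor_self, Bool.xor_false]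
    | succ i ih =>
      rw [← hf.eq_xor_iff_of_mem_tileEdges hg hi s (G.ie_mem_tileEdges_succ i),
        hf.eq_xor_iff_of_mem_tileEdges hg (by omega) s (G.ie_mem_tileEdges i)]
      exact ih (by omega)
  refine ⟨s, fun e he => ?_⟩
  obtain ⟨i, hi, he⟩ := Finset.mem_biUnion.mp he
  have hi : i ≤ G.n := Nat.lt_succ_iff.mp (Finset.mem_range.mp hi)
  exact (hf.eq_xor_iff_of_mem_tileEdges hg hi s he).mpr (hsouth i hi)

end IsSignFunction

/-- The `k`-th edge of the upper boundary path, which runs from the origin along west and north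
edges. -/
def upperEdge : ℕ → Edge
  | 0 => west (G.pos 0)
  | k + 1 => if k < G.n ∧ G.dir k = true then west (G.pos (k + 1)) else north (G.pos k)

/-- The `k`-th edge of the lower boundary path, which runs from the origin along south and east
edges. -/
def lowerEdge : ℕ → Edge
  | 0 => south (G.pos 0)
  | k + 1 => if k < G.n ∧ G.dir k = false then south (G.pos (k + 1)) else east (G.pos k)

lemma west_eq_upperEdge {i : ℕ} (hi : i ≤ G.n) (h : west (G.pos i) ∉ G.interiorEdges) :
    west (G.pos i) = G.upperEdge i := by
  cases i with
  | zero => rfl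
  | succ k =>
    have hd : G.dir k = true := by
      by_contra hd
      rw [Bool.not_eq_true] at hd
      refine h ?_
      rw [west, G.pos_succ_of_dir_eq_false hd]
      simpa [ie, hd, east] using G.ie_mem_interiorEdges (i := k) (by omega)
    simp [upperEdge, hd, show k < G.n by omega]

lemma south_eq_lowerEdge {i : ℕ} (hi : i ≤ G.n) (h : south (G.pos i) ∉ G.interiorEdges) :
    south (G.pos i) = G.lowerEdge i := by
  cases i with
  | zero => rfl
  | succ k =>
    have hd : G.dir k = false := by
      by_contra hd
      rw [Bool.not_eq_false] at hd
      refine h ?_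
      rw [south, G.pos_succ_of_dir_eq_true hd]
      simpa [ie, hd, north] using G.ie_mem_interiorEdges (i := k) (by omega)
    simp [lowerEdge, hd, show k < G.n by omega]

lemma north_eq_upperEdge {i : ℕ} (h : north (G.pos i) ∉ G.interiorEdges) :
    north (G.pos i) = G.upperEdge (i + 1) := by
  rw [upperEdge, if_neg]
  rintro ⟨hi, hd⟩
  exact h (by simpa [ie, hd] using G.ie_mem_interiorEdges hi)

lemma east_eq_lowerEdge {i : ℕ} (h : east (G.pos i) ∉ G.interiorEdges) :
    east (G.pos i) = G.lowerEdge (i + 1) := by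
  rw [lowerEdge, if_neg]
  rintro ⟨hi, hd⟩
  exact h (by simpa [ie, hd] using G.ie_mem_interiorEdges hi)

lemma IsBoundaryEdge.exists_eq_upperEdge_or_lowerEdge {e : Edge} (he : G.IsBoundaryEdge e) :
    ∃ l, e = G.upperEdge l ∨ e = G.lowerEdge l := by
  obtain ⟨i, hi, rfl | rfl | rfl | rfl⟩ := G.mem_edges_iff.mp he.1
  · exact ⟨i, Or.inr (G.south_eq_lowerEdge hi he.2)⟩
  · exact ⟨i + 1, Or.inl (G.north_eq_upperEdge he.2)⟩
  · exact ⟨i, Or.inl (G.west_eq_upperEdge hi he.2)⟩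
  · exact ⟨i + 1, Or.inr (G.east_eq_lowerEdge he.2)⟩

lemma level_upperEdge (k : ℕ) : (G.upperEdge k).1.1 + (G.upperEdge k).1.2 = k := by
  cases k with
  | zero => simp [upperEdge, west]
  | succ k =>
    have := G.pos_fst_add_snd k
    have := G.pos_fst_add_snd (k + 1)
    simp only [upperEdge]
    split <;> simp [west, north] <;> omega

lemma level_lowerEdge (k : ℕ) : (G.lowerEdge k).1.1 + (G.lowerEdge k).1.2 = k := by
  cases k with
  | zero => simp [lowerEdge, south]
  | succ k =>
    have := G.pos_fst_add_snd k
    have := G.pos_fst_add_snd (k + 1)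
    simp only [lowerEdge]
    split <;> simp [south, east] <;> omega

lemma upperEdge_succ_ne (k : ℕ) : G.upperEdge (k + 1) ≠ G.upperEdge k := fun h => by
  have := congrArg (fun e : Edge => e.1.1 + e.1.2) h
  simp only [level_upperEdge] at this
  omega

lemma lowerEdge_succ_ne (k : ℕ) : G.lowerEdge (k + 1) ≠ G.lowerEdge k := fun h => by
  have := congrArg (fun e : Edge => e.1.1 + e.1.2) h
  simp only [level_lowerEdge] at this
  omega

lemma nw_mem_ends_upperEdge {k : ℕ} (hk : k ≤ G.n) :
    ((G.pos k).1, (G.pos k).2 + 1) ∈ ends (G.upperEdge k) := by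
  cases k with
  | zero => simp [upperEdge, ends, west]
  | succ k =>
    simp only [upperEdge]
    split_ifs with h
    · simp [ends, west]
    · have hd : G.dir k = false := by simpa [show k < G.n by omega] using h
      simp [ends, north, G.pos_succ_of_dir_eq_false hd]

lemma nw_mem_ends_upperEdge_succ (k : ℕ) :
    ((G.pos k).1, (G.pos k).2 + 1) ∈ ends (G.upperEdge (k + 1)) := by
  simp only [upperEdge]
  split
  · simp [ends, west, G.pos_succ_of_dir_eq_true (‹_ ∧ _›).2]
  · simp [ends, north]

lemma se_mem_ends_lowerEdge {k : ℕ} (hk : k ≤ G.n) :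
    ((G.pos k).1 + 1, (G.pos k).2) ∈ ends (G.lowerEdge k) := by
  cases k with
  | zero => simp [lowerEdge, ends, south]
  | succ k =>
    simp only [lowerEdge]
    split_ifs with h
    · simp [ends, south]
    · have hd : G.dir k = true := by simpa [show k < G.n by omega] using h
      simp [ends, east, G.pos_succ_of_dir_eq_true hd]

lemma se_mem_ends_lowerEdge_succ (k : ℕ) :
    ((G.pos k).1 + 1, (G.pos k).2) ∈ ends (G.lowerEdge (k + 1)) := by
  simp only [lowerEdge]
  split
  · simp [ends, south, G.pos_succ_of_dir_eq_false (‹_ ∧ _›).2]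
  · simp [ends, east]

lemma nw_not_mem_ends_lowerEdge {k : ℕ} (hk : k ≤ G.n) (l : ℕ) :
    ((G.pos k).1, (G.pos k).2 + 1) ∉ ends (G.lowerEdge l) := by
  intro h
  have hlev := level_of_mem_ends h
  have := G.pos_fst_add_snd k
  rw [G.level_lowerEdge] at hlev
  dsimp only at hlev
  cases l with
  | zero =>
    have := G.pos_nonneg k
    simp [lowerEdge, ends, south] at h
    omega
  | succ j =>
    obtain rfl | rfl : k = j ∨ k = j + 1 := by omega
    · simp only [lowerEdge] at h
      split_ifs at h with hj
      · simp [ends, south, G.pos_succ_of_dir_eq_false hj.2] at h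
      · simp [ends, east] at h
    · simp only [lowerEdge] at h
      split_ifs at h with hj
      · simp [ends, south, G.pos_succ_of_dir_eq_false hj.2] at h
      · have hd : G.dir j = true := by simpa [show j < G.n by omega] using hj
        simp [ends, east, G.pos_succ_of_dir_eq_true hd] at h

lemma se_not_mem_ends_upperEdge {k : ℕ} (hk : k ≤ G.n) (l : ℕ) :
    ((G.pos k).1 + 1, (G.pos k).2) ∉ ends (G.upperEdge l) := by
  intro h
  have hlev := level_of_mem_ends h
  have := G.pos_fst_add_snd k
  rw [G.level_upperEdge] at hlev
  dsimp only at hlev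
  cases l with
  | zero =>
    have := G.pos_nonneg k
    simp [upperEdge, ends, west] at h
    omega
  | succ j =>
    obtain rfl | rfl : k = j ∨ k = j + 1 := by omega
    · simp only [upperEdge] at h
      split_ifs at h with hj
      · simp [ends, west, G.pos_succ_of_dir_eq_true hj.2] at h
      · simp [ends, north] at h
    · simp only [upperEdge] at h
      split_ifs at h with hj
      · simp [ends, west, G.pos_succ_of_dir_eq_true hj.2] at h
      · have hd : G.dir j = false := by simpa [show j < G.n by omega] using hj
        simp [ends, north, G.pos_succ_of_dir_eq_false hd] at h

namespace IsPerfectMatching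

variable {G} {P : Finset Edge}

lemma mem_iff_not_mem (hP : G.IsPerfectMatching P) {v : Pt} {e₁ e₂ : Edge}
    (hv : v ∈ G.vertices) (h₁ : v ∈ ends e₁) (h₂ : v ∈ ends e₂) (hne : e₁ ≠ e₂)
    (hcover : ∀ e ∈ P, v ∈ ends e → e = e₁ ∨ e = e₂) : e₁ ∈ P ↔ e₂ ∉ P := by
  obtain ⟨x, hx⟩ := Finset.card_eq_one.mp (hP.2 v hv)
  have hmem : ∀ e, e ∈ P ∧ v ∈ ends e ↔ e = x := fun e => by
    rw [← Finset.mem_singleton, ← hx, Finset.mem_filter]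
  have hx' := (hmem x).2 rfl
  rw [← and_iff_left (a := e₁ ∈ P) h₁, ← and_iff_left (a := e₂ ∈ P) h₂, hmem, hmem]
  rcases hcover x hx'.1 hx'.2 with rfl | rfl
  · simp [hne.symm]
  · simp [hne]

lemma upperEdge_zero_mem_iff (hP : G.IsPerfectMatching P)
    (hbd : ∀ e ∈ P, G.IsBoundaryEdge e) :
    G.upperEdge 0 ∈ P ↔ G.lowerEdge 0 ∉ P := by
  refine hP.mem_iff_not_mem (v := G.pos 0)
    (G.mem_vertices (Nat.zero_le _) (by simp [tileVertices]))
    (by simp [upperEdge, ends, west]) (by simp [lowerEdge, ends, south])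
    (by simp [upperEdge, lowerEdge, west, south]) fun e he hv => ?_
  obtain ⟨l, rfl | rfl⟩ := (hbd e he).exists_eq_upperEdge_or_lowerEdge
  · have := level_of_mem_ends hv
    rw [G.level_upperEdge] at this
    obtain rfl : l = 0 := by simp at this; omega
    exact Or.inl rfl
  · have := level_of_mem_ends hv
    rw [G.level_lowerEdge] at this
    obtain rfl : l = 0 := by simp at this; omega
    exact Or.inr rfl

lemma upperEdge_succ_mem_iff (hP : G.IsPerfectMatching P)
    (hbd : ∀ e ∈ P, G.IsBoundaryEdge e) {k : ℕ} (hk : k ≤ G.n) :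
    G.upperEdge (k + 1) ∈ P ↔ G.upperEdge k ∉ P := by
  refine hP.mem_iff_not_mem (G.mem_vertices hk (by simp [tileVertices]))
    (G.nw_mem_ends_upperEdge_succ k) (G.nw_mem_ends_upperEdge hk) (G.upperEdge_succ_ne k)
    fun e he hv => ?_
  obtain ⟨l, rfl | rfl⟩ := (hbd e he).exists_eq_upperEdge_or_lowerEdge
  · have := level_of_mem_ends hv
    have := G.pos_fst_add_snd k
    rw [G.level_upperEdge] at *
    obtain rfl | rfl : l = k + 1 ∨ l = k := by dsimp only at *; omega
    exacts [Or.inl rfl, Or.inr rfl]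
  · exact absurd hv (G.nw_not_mem_ends_lowerEdge hk l)

lemma lowerEdge_succ_mem_iff (hP : G.IsPerfectMatching P)
    (hbd : ∀ e ∈ P, G.IsBoundaryEdge e) {k : ℕ} (hk : k ≤ G.n) :
    G.lowerEdge (k + 1) ∈ P ↔ G.lowerEdge k ∉ P := by
  refine hP.mem_iff_not_mem (G.mem_vertices hk (by simp [tileVertices]))
    (G.se_mem_ends_lowerEdge_succ k) (G.se_mem_ends_lowerEdge hk) (G.lowerEdge_succ_ne k)
    fun e he hv => ?_
  obtain ⟨l, rfl | rfl⟩ := (hbd e he).exists_eq_upperEdge_or_lowerEdge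
  · exact absurd hv (G.se_not_mem_ends_upperEdge hk l)
  · have := level_of_mem_ends hv
    have := G.pos_fst_add_snd k
    rw [G.level_lowerEdge] at *
    obtain rfl | rfl : l = k + 1 ∨ l = k := by dsimp only at *; omega
    exacts [Or.inl rfl, Or.inr rfl]

theorem exists_upperEdge_lowerEdge_mem_iff_bodd (hP : G.IsPerfectMatching P)
    (hbd : ∀ e ∈ P, G.IsBoundaryEdge e) :
    ∃ c : Bool, ∀ k ≤ G.n + 1,
      (G.upperEdge k ∈ P ↔ k.bodd = c) ∧ (G.lowerEdge k ∈ P ↔ k.bodd = !c) := by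
  refine ⟨decide (G.upperEdge 0 ∉ P), fun k hk => ?_⟩
  induction k with
  | zero => simp [hP.upperEdge_zero_mem_iff hbd]
  | succ k ih =>
    obtain ⟨ihu, ihl⟩ := ih (by omega)
    rw [hP.upperEdge_succ_mem_iff hbd (by omega), hP.lowerEdge_succ_mem_iff hbd (by omega),
      ihu, ihl, Nat.bodd_succ]
    cases k.bodd <;> simp

theorem exists_canonSign_pattern (hP : G.IsPerfectMatching P)
    (hbd : ∀ e ∈ P, G.IsBoundaryEdge e) :
    ∃ c, ∀ e, G.IsBoundaryEdge e →
      (G.IsNE e → (e ∈ P ↔ canonSign e = c)) ∧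
        (G.IsSW e → (e ∈ P ↔ canonSign e = !c)) := by
  obtain ⟨c, hc⟩ := hP.exists_upperEdge_lowerEdge_mem_iff_bodd hbd
  refine ⟨!c, fun e he => ⟨?_, ?_⟩⟩
  · rintro ⟨i, hi, rfl | rfl⟩
    · rw [canonSign_north, G.north_eq_upperEdge he.2, (hc (i + 1) (by omega)).1]
      simp
    · rw [canonSign_east, G.east_eq_lowerEdge he.2, (hc (i + 1) (by omega)).2]
  · rintro ⟨i, hi, rfl | rfl⟩
    · rw [canonSign_south, G.south_eq_lowerEdge hi he.2, (hc i (by omega)).2]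
      simp
    · rw [canonSign_west, G.west_eq_upperEdge hi he.2, (hc i (by omega)).1]
      simp

end IsPerfectMatching

end SnakeGraph

/-- Lemma on signs of boundary matchings, parts (3) and (4).
Let `G` be a snake graph with sign function `f` and let `P` be a perfect matching of `G`
consisting of boundary edges only.  If `a` is a north-or-east boundary edge lying in `P`
(or a south-or-west boundary edge not lying in `P`), then `P` consists precisely of all
north-or-east boundary edges `b` with `f b = f a` together with all south-or-west boundary
edges `b` with `f b = ! f a`. -/
theorem boundary_matching_determined (G : SnakeGraph) (f : Edge → Bool)
    (hf : G.IsSignFunction f) (P : Finset Edge)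
    (hP : G.IsPerfectMatching P) (hbd : ∀ e ∈ P, G.IsBoundaryEdge e)
    (a : Edge) (ha : G.IsBoundaryEdge a)
    (hcase : (G.IsNE a ∧ a ∈ P) ∨ (G.IsSW a ∧ a ∉ P)) :
    ∀ b : Edge, b ∈ P ↔
      G.IsBoundaryEdge b ∧
        ((G.IsNE b ∧ f b = f a) ∨ (G.IsSW b ∧ f b = ! f a)) := by
  obtain ⟨c, hc⟩ := hP.exists_canonSign_pattern hbd
  obtain ⟨s, hs⟩ := hf.exists_eq_xor G.isSignFunction_canonSign
  have hca : canonSign a = c := by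
    rcases hcase with ⟨hne, haP⟩ | ⟨hsw, haP⟩
    · exact ((hc a ha).1 hne).mp haP
    · simpa using mt ((hc a ha).2 hsw).mpr haP
  have hfa : ∀ b ∈ G.edges,
      (f b = f a ↔ canonSign b = c) ∧ (f b = !f a ↔ canonSign b = !c) := by
    intro b hb
    rw [hs b hb, hs a ha.1, ← Bool.not_xor, Bool.xor_left_inj, Bool.xor_left_inj, hca]
    exact ⟨Iff.rfl, Iff.rfl⟩
  intro b
  constructor
  · intro hb
    have hbb := hbd b hb
    rcases G.isNE_or_isSW_of_mem_edges hbb.1 with hne | hsw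
    · exact ⟨hbb, Or.inl ⟨hne, (hfa b hbb.1).1.mpr (((hc b hbb).1 hne).mp hb)⟩⟩
    · exact ⟨hbb, Or.inr ⟨hsw, (hfa b hbb.1).2.mpr (((hc b hbb).2 hsw).mp hb)⟩⟩
  · rintro ⟨hbb, ⟨hne, hfb⟩ | ⟨hsw, hfb⟩⟩
    · exact ((hc b hbb).1 hne).mpr ((hfa b hbb.1).1.mp hfb)
    · exact ((hc b hbb).2 hsw).mpr ((hfa b hbb.1).2.mp hfb)

end SnakeCalc
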